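/- Let w, w′ ∈ 𝕎 with w₁₃ ≠ 0 and w′₁₃ ≠ 0. Then w and w′ lie in the same G-orbit (i.e., there exists (ν₁, ν₂) ∈ G with w′ = ν₂ w ν₁⁻¹) if and only if Δ(w) and Δ(w′) lie in the same GL₂(ℂ) × GL₂(ℂ)-orbit, i.e., there exist A, B ∈ GL₂(ℂ) with Δ(w′) = B · Δ(w) · A⁻¹. -/

import Mathlib

open MvPolynomial Matrix

noncomputable section

/-- The polynomial ring `R = ℂ[x₀,x₁,x₂]`. -/
abbrev Rp : Type := MvPolynomial (Fin 3) ℂ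

/-- `p` is a linear form. -/
def IsLin (p : Rp) : Prop := p.IsHomogeneous 1

/-- `p` is a quadratic form. -/
def IsQuad (p : Rp) : Prop := p.IsHomogeneous 2

/-- Membership in `𝕎` : entries `w₁₁, w₁₂, w₂₃, w₃₃` linear, `w₁₃` a constant,
`w₂₁, w₂₂, w₃₁, w₃₂` quadratic. -/
def Wmat (w : Matrix (Fin 3) (Fin 3) Rp) : Prop :=
  IsLin (w 0 0) ∧ IsLin (w 0 1) ∧ IsLin (w 1 2) ∧ IsLin (w 2 2) ∧
  (∃ c : ℂ, w 0 2 = C c) ∧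
  IsQuad (w 1 0) ∧ IsQuad (w 1 1) ∧ IsQuad (w 2 0) ∧ IsQuad (w 2 1)

/-- `Δ(w) = w₁₃·[[w₂₁, w₂₂],[w₃₁, w₃₂]] − [[w₂₃],[w₃₃]]·[w₁₁, w₁₂]`. -/
def Δ (w : Matrix (Fin 3) (Fin 3) Rp) : Matrix (Fin 2) (Fin 2) Rp :=
  !![w 0 2 * w 1 0 - w 1 2 * w 0 0, w 0 2 * w 1 1 - w 1 2 * w 0 1;
     w 0 2 * w 2 0 - w 2 2 * w 0 0, w 0 2 * w 2 1 - w 2 2 * w 0 1]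

/-- The matrix `ν₁ = [[A, 0],[φ, α]]`. -/
def nu1 (A : Matrix (Fin 2) (Fin 2) ℂ) (α : ℂ) (φ : Fin 2 → Rp) :
    Matrix (Fin 3) (Fin 3) Rp :=
  !![C (A 0 0), C (A 0 1), 0;
     C (A 1 0), C (A 1 1), 0;
     φ 0, φ 1, C α]

/-- The matrix `ν₂ = [[β, 0],[ψ, B]]`. -/
def nu2 (B : Matrix (Fin 2) (Fin 2) ℂ) (β : ℂ) (ψ : Fin 2 → Rp) :
    Matrix (Fin 3) (Fin 3) Rp :=
  !![C β, 0, 0;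
     ψ 0, C (B 0 0), C (B 0 1);
     ψ 1, C (B 1 0), C (B 1 1)]

/-!
Write `w = [[a, c], [Q, l]]` in blocks (`a` a row, `c = w₁₃`, `Q` the quadratic 2×2 block,
`l` a column), so that `Δ(w) = c Q - l a`. The orbit equation `w' ν₁ = ν₂ w` splits into four
block equations: `c' α = β c`, `a' A + c' φ = β a`, `l' α = ψ c + B l` and
`Q' A + l' φ = ψ a + B Q`. Eliminating `φ` and `ψ` gives `Δ(w') (α A) = (β B) Δ(w)`.
Conversely, given `Δ(w') A = B Δ(w)`, take `α = c`, `β = c'`, replace `B` by `(c / c') B`, and solve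
the second and third equations for `φ` and `ψ` (possible since `c'` is a unit); the fourth is
then `c'⁻¹` times the relation between the `Δ`s.
-/

lemma Matrix.eq_mul_nonsing_inv_iff_mul_eq {n R : Type*} [Fintype n] [DecidableEq n] [CommRing R]
    {M : Matrix n n R} (hM : IsUnit M.det) {X Y : Matrix n n R} :
    X = Y * M⁻¹ ↔ X * M = Y :=
  Units.eq_mul_inv_iff_mul_eq (nonsingInvUnit M hM)

lemma Matrix.GeneralLinearGroup.eq_mul_map_inv_iff {n R S : Type*} [Fintype n] [DecidableEq n]
    [CommRing R] [CommRing S] (f : R →+* S) (A : GL n R) {X Y : Matrix n n S} :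
    X = Y * (↑A⁻¹ : Matrix n n R).map f ↔ X * (↑A : Matrix n n R).map f = Y :=
  Units.eq_mul_inv_iff_mul_eq (GeneralLinearGroup.map f A)

section Entries

variable (w : Matrix (Fin 3) (Fin 3) Rp)

lemma Δ_apply (i j : Fin 2) :
    Δ w i j = w 0 2 * w i.succ j.castSucc - w i.succ 2 * w 0 j.castSucc := by
  fin_cases i <;> fin_cases j <;> rfl

lemma mul_nu1_apply_castSucc (A : Matrix (Fin 2) (Fin 2) ℂ) (α : ℂ) (φ : Fin 2 → Rp)
    (k : Fin 3) (j : Fin 2) :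
    (w * nu1 A α φ) k j.castSucc = ∑ m : Fin 2, w k m.castSucc * C (A m j) + w k 2 * φ j := by
  fin_cases j <;> simp [nu1, mul_apply, Fin.sum_univ_three, add_assoc]

lemma mul_nu1_apply_two (A : Matrix (Fin 2) (Fin 2) ℂ) (α : ℂ) (φ : Fin 2 → Rp) (k : Fin 3) :
    (w * nu1 A α φ) k 2 = w k 2 * C α := by
  simp [nu1, mul_apply, Fin.sum_univ_succ]

lemma nu2_mul_apply_zero (B : Matrix (Fin 2) (Fin 2) ℂ) (β : ℂ) (ψ : Fin 2 → Rp) (j : Fin 3) :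
    (nu2 B β ψ * w) 0 j = C β * w 0 j := by
  simp [nu2, mul_apply, Fin.sum_univ_succ]

lemma nu2_mul_apply_succ (B : Matrix (Fin 2) (Fin 2) ℂ) (β : ℂ) (ψ : Fin 2 → Rp)
    (i : Fin 2) (j : Fin 3) :
    (nu2 B β ψ * w) i.succ j = ψ i * w 0 j + ∑ m : Fin 2, C (B i m) * w m.succ j := by
  fin_cases i <;> simp [nu2, mul_apply, Fin.sum_univ_succ]

end Entries

lemma det_nu1 (A : Matrix (Fin 2) (Fin 2) ℂ) (α : ℂ) (φ : Fin 2 → Rp) :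
    (nu1 A α φ).det = C (α * A.det) := by
  simp [nu1, det_fin_three, det_fin_two]
  ring

lemma isUnit_det_nu1 (A : GL (Fin 2) ℂ) (α : ℂˣ) (φ : Fin 2 → Rp) :
    IsUnit (nu1 A α φ).det := by
  rw [det_nu1]
  exact (α.isUnit.mul (isUnits_det_units A)).map C

lemma Wmat.isLin_top {w : Matrix (Fin 3) (Fin 3) Rp} (hw : Wmat w) :
    ∀ j : Fin 2, IsLin (w 0 j.castSucc) :=
  Fin.forall_fin_two.2 ⟨hw.1, hw.2.1⟩

lemma Wmat.isLin_right {w : Matrix (Fin 3) (Fin 3) Rp} (hw : Wmat w) :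
    ∀ i : Fin 2, IsLin (w i.succ 2) :=
  Fin.forall_fin_two.2 ⟨hw.2.2.1, hw.2.2.2.1⟩

theorem Δ_mul_map_smul_eq_of_mul_nu1_eq {w w' : Matrix (Fin 3) (Fin 3) Rp}
    {A B : Matrix (Fin 2) (Fin 2) ℂ} {α β : ℂ} {φ ψ : Fin 2 → Rp}
    (h : w' * nu1 A α φ = nu2 B β ψ * w) :
    Δ w' * (α • A).map C = (β • B).map C * Δ w := by
  ext i j : 1
  have top := congr_fun₂ h 0 j.castSucc
  have corner := congr_fun₂ h 0 2
  have side := congr_fun₂ h i.succ 2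
  have inner := congr_fun₂ h i.succ j.castSucc
  rw [mul_nu1_apply_castSucc, nu2_mul_apply_zero] at top
  rw [mul_nu1_apply_two, nu2_mul_apply_zero] at corner
  rw [mul_nu1_apply_two, nu2_mul_apply_succ] at side
  rw [mul_nu1_apply_castSucc, nu2_mul_apply_succ] at inner
  simp only [mul_apply, Δ_apply, map_apply, Matrix.smul_apply, smul_eq_mul, map_mul,
    Fin.sum_univ_two] at top side inner ⊢
  linear_combination C α * w' 0 2 * inner - C α * w' i.succ 2 * top
    + (ψ i * w 0 j.castSucc + C (B i 0) * w (Fin.succ 0) j.castSucc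
      + C (B i 1) * w (Fin.succ 1) j.castSucc) * corner - (C β * w 0 j.castSucc) * side

section Transport

variable (w w' : Matrix (Fin 3) (Fin 3) Rp) (c' : ℂ)

-- `φ` and `ψ` solved from `a' A + c' φ = c' a` and `l' c = ψ c + (c / c') B l`.
def orbitPhi (A : Matrix (Fin 2) (Fin 2) ℂ) (j : Fin 2) : Rp :=
  w 0 j.castSucc - C c'⁻¹ * ∑ m : Fin 2, w' 0 m.castSucc * C (A m j)

def orbitPsi (B : Matrix (Fin 2) (Fin 2) ℂ) (i : Fin 2) : Rp :=
  w' i.succ 2 - C c'⁻¹ * ∑ m : Fin 2, C (B i m) * w m.succ 2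

variable {w w'} in
lemma isLin_orbitPhi (ha : ∀ j : Fin 2, IsLin (w 0 j.castSucc))
    (ha' : ∀ j : Fin 2, IsLin (w' 0 j.castSucc)) (A : Matrix (Fin 2) (Fin 2) ℂ) (j : Fin 2) :
    IsLin (orbitPhi w w' c' A j) :=
  IsHomogeneous.sub (ha j) <| IsHomogeneous.C_mul (IsHomogeneous.sum _ _ _ fun m _ => by
    rw [mul_comm]; exact IsHomogeneous.C_mul (ha' m) _) _

variable {w w'} in
lemma isLin_orbitPsi (hl : ∀ i : Fin 2, IsLin (w i.succ 2))
    (hl' : ∀ i : Fin 2, IsLin (w' i.succ 2)) (B : Matrix (Fin 2) (Fin 2) ℂ) (i : Fin 2) :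
    IsLin (orbitPsi w w' c' B i) :=
  IsHomogeneous.sub (hl' i) <|
    IsHomogeneous.C_mul (IsHomogeneous.sum _ _ _ fun m _ => IsHomogeneous.C_mul (hl m) _) _

theorem mul_nu1_orbitPhi_eq_nu2_orbitPsi_mul {c : ℂ} (hc : w 0 2 = C c) (hc' : w' 0 2 = C c')
    (hc'0 : c' ≠ 0) {A B : Matrix (Fin 2) (Fin 2) ℂ}
    (hΔ : Δ w' * A.map C = B.map C * Δ w) :
    w' * nu1 A c (orbitPhi w w' c' A) = nu2 ((c / c') • B) c' (orbitPsi w w' c' B) * w := by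
  have hinv : C c' * C c'⁻¹ = (1 : Rp) := by rw [← C_mul, mul_inv_cancel₀ hc'0, C_1]
  ext k j : 1
  induction k using Fin.cases with
  | zero =>
    induction j using Fin.lastCases with
    | last =>
      rw [show Fin.last 2 = 2 from rfl, mul_nu1_apply_two, nu2_mul_apply_zero, hc, hc', mul_comm]
    | cast j =>
      rw [mul_nu1_apply_castSucc, nu2_mul_apply_zero, hc', orbitPhi]
      linear_combination (-∑ m : Fin 2, w' 0 m.castSucc * C (A m j)) * hinv
  | succ i =>
    induction j using Fin.lastCases with
    | last =>
      rw [show Fin.last 2 = 2 from rfl, mul_nu1_apply_two, nu2_mul_apply_succ, hc, orbitPsi]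
      simp only [Matrix.smul_apply, smul_eq_mul, div_eq_mul_inv, C_mul, Fin.sum_univ_two]
      ring
    | cast j =>
      have hΔij := congr_fun₂ hΔ i j
      simp only [mul_apply, Δ_apply, map_apply, Fin.sum_univ_two] at hΔij
      rw [mul_nu1_apply_castSucc, nu2_mul_apply_succ, orbitPhi, orbitPsi]
      simp only [Matrix.smul_apply, smul_eq_mul, div_eq_mul_inv, C_mul, Fin.sum_univ_two]
      rw [hc, hc'] at hΔij
      linear_combination C c'⁻¹ * hΔij
        - (w' i.succ (Fin.castSucc 0) * C (A 0 j) + w' i.succ (Fin.castSucc 1) * C (A 1 j)) * hinv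

end Transport

/-- for `w, w' ∈ 𝕎` with `w₁₃ ≠ 0 ≠ w'₁₃`, `w` and `w'` are in the same
`G`-orbit iff `Δ(w)` and `Δ(w')` are in the same `GL₂(ℂ) × GL₂(ℂ)`-orbit. -/
theorem stmt2 (w w' : Matrix (Fin 3) (Fin 3) Rp) (hw : Wmat w) (hw' : Wmat w')
    (h13 : w 0 2 ≠ 0) (h13' : w' 0 2 ≠ 0) :
    (∃ (A B : Matrix.GeneralLinearGroup (Fin 2) ℂ) (α β : ℂˣ) (φ ψ : Fin 2 → Rp),
        (∀ i, IsLin (φ i)) ∧ (∀ i, IsLin (ψ i)) ∧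
        w' = nu2 (B : Matrix (Fin 2) (Fin 2) ℂ) (β : ℂ) ψ * w *
          (nu1 (A : Matrix (Fin 2) (Fin 2) ℂ) (α : ℂ) φ)⁻¹) ↔
    (∃ A B : Matrix.GeneralLinearGroup (Fin 2) ℂ,
        Δ w' = ((B : Matrix (Fin 2) (Fin 2) ℂ)).map (fun x => C x) * Δ w *
          ((A⁻¹ : Matrix.GeneralLinearGroup (Fin 2) ℂ) :
            Matrix (Fin 2) (Fin 2) ℂ).map (fun x => C x)) := by
  constructor
  · rintro ⟨A, B, α, β, φ, ψ, -, -, horbit⟩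
    rw [eq_mul_nonsing_inv_iff_mul_eq (isUnit_det_nu1 A α φ)] at horbit
    exact ⟨α • A, β • B, (GeneralLinearGroup.eq_mul_map_inv_iff C _).2
      (Δ_mul_map_smul_eq_of_mul_nu1_eq horbit)⟩
  · rintro ⟨A, B, hΔ⟩
    obtain ⟨c, hc⟩ := hw.2.2.2.2.1
    obtain ⟨c', hc'⟩ := hw'.2.2.2.2.1
    have hc0 : c ≠ 0 := by rintro rfl; exact h13 (by rw [hc, C_0])
    have hc'0 : c' ≠ 0 := by rintro rfl; exact h13' (by rw [hc', C_0])
    refine ⟨A, (Units.mk0 c hc0 / Units.mk0 c' hc'0) • B, Units.mk0 c hc0, Units.mk0 c' hc'0,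
      orbitPhi w w' c' A, orbitPsi w w' c' B,
      isLin_orbitPhi c' hw.isLin_top hw'.isLin_top A,
      isLin_orbitPsi c' hw.isLin_right hw'.isLin_right B,
      (eq_mul_nonsing_inv_iff_mul_eq (isUnit_det_nu1 A _ _)).2 ?_⟩
    exact mul_nu1_orbitPhi_eq_nu2_orbitPsi_mul w w' c' hc hc' hc'0
      ((GeneralLinearGroup.eq_mul_map_inv_iff C A).1 hΔ)
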